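/- Let g ∈ U(3) have a row with all entries nonzero or a column with all entries nonzero, and set T₁ = iσ₁, T₂ = iσ₂, T₃ = iσ₃ (Pauli matrices). Then the complex subalgebra of M₂(ℂ) ⊗ M₂(ℂ) generated by the nine elements gᵢⱼ · (Tᵢ ⊗ Tⱼ), 1 ≤ i,j ≤ 3, is all of M₂(ℂ) ⊗ M₂(ℂ) ≅ M₄(ℂ). -/

import Mathlib

/-!
Up to nonzero scalars the generators are the `Tᵢ ⊗ Tⱼ`, and the `Tᵢ` obey the quaternion relations
`Tᵢ² = -1`, `T₂T₃ = -T₁` (cyclically). If row `i` of `g` has no zero entry, the products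
`(Tᵢ ⊗ T_a)(Tᵢ ⊗ T_b) = 1 ⊗ T_a T_b` give every `1 ⊗ T_k`. Every row of a unitary matrix has a
nonzero entry `g_kj`, and `(1 ⊗ T_j)(T_k ⊗ T_j) = -(T_k ⊗ 1)`. Since `1, T₁, T₂, T₃` span `M₂(ℂ)`,
the algebra contains every `X ⊗ 1` and `1 ⊗ Y`, hence every `X ⊗ Y`, and these span `M₄(ℂ)`.
The column case is the mirror image.
-/

open Kronecker

namespace Matrix

variable {R m n l p : Type*}

theorem neg_kronecker [Ring R] (A : Matrix l m R) (B : Matrix n p R) :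
    (-A) ⊗ₖ B = -(A ⊗ₖ B) := by
  ext; simp

theorem kronecker_neg [Ring R] (A : Matrix l m R) (B : Matrix n p R) :
    A ⊗ₖ (-B) = -(A ⊗ₖ B) := by
  ext; simp

theorem exists_ne_zero_of_mem_unitaryGroup [Fintype n] [DecidableEq n] [CommRing R] [StarRing R]
    [Nontrivial R] {U : Matrix n n R} (hU : U ∈ unitaryGroup n R) (i : n) : ∃ j, U i j ≠ 0 := by
  by_contra! h
  simpa [mul_apply, h] using congr_fun₂ (mem_unitaryGroup_iff.mp hU) i i

theorem exists_ne_zero_of_mem_unitaryGroup' [Fintype n] [DecidableEq n] [CommRing R] [StarRing R]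
    [Nontrivial R] {U : Matrix n n R} (hU : U ∈ unitaryGroup n R) (j : n) : ∃ i, U i j ≠ 0 := by
  by_contra! h
  simpa [mul_apply, h] using congr_fun₂ (mem_unitaryGroup_iff'.mp hU) j j

end Matrix

open Matrix

section KroneckerSubalgebra

variable {R m n ι : Type*} [CommSemiring R] [Fintype m] [Fintype n] [DecidableEq m] [DecidableEq n]
  {A : Subalgebra R (Matrix (m × n) (m × n) R)}

theorem Subalgebra.eq_top_of_kronecker_one_mem
    (hl : ∀ X : Matrix m m R, X ⊗ₖ (1 : Matrix n n R) ∈ A)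
    (hr : ∀ Y : Matrix n n R, (1 : Matrix m m R) ⊗ₖ Y ∈ A) : A = ⊤ := by
  refine eq_top_iff.2 fun M _ => M.induction_on' (zero_mem A) (fun _ _ => add_mem) ?_
  rintro ⟨i, k⟩ ⟨j, l⟩ x
  have : single (i, k) (j, l) x = (single i j x ⊗ₖ 1) * (1 ⊗ₖ single k l 1) := by
    rw [← mul_kronecker_mul, mul_one, one_mul, single_kronecker_single, mul_one]
  exact this ▸ mul_mem (hl _) (hr _)

theorem kronecker_one_mem_of_span_eq_top {T : ι → Matrix m m R}
    (hT : Submodule.span R (insert 1 (Set.range T)) = ⊤) (h : ∀ k, T k ⊗ₖ (1 : Matrix n n R) ∈ A)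
    (X : Matrix m m R) : X ⊗ₖ (1 : Matrix n n R) ∈ A := by
  have : Submodule.span R (insert 1 (Set.range T)) ≤
      (Subalgebra.toSubmodule A).comap ((kroneckerBilinear (R := R)).flip 1) := by
    refine Submodule.span_le.2 (Set.insert_subset ?_ (Set.range_subset_iff.2 h))
    show (1 : Matrix m m R) ⊗ₖ (1 : Matrix n n R) ∈ A
    rw [one_kronecker_one]
    exact one_mem A
  exact this (hT ▸ Submodule.mem_top)

theorem one_kronecker_mem_of_span_eq_top {T : ι → Matrix n n R}
    (hT : Submodule.span R (insert 1 (Set.range T)) = ⊤) (h : ∀ k, (1 : Matrix m m R) ⊗ₖ T k ∈ A)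
    (Y : Matrix n n R) : (1 : Matrix m m R) ⊗ₖ Y ∈ A := by
  have : Submodule.span R (insert 1 (Set.range T)) ≤
      (Subalgebra.toSubmodule A).comap (kroneckerBilinear (R := R) 1) := by
    refine Submodule.span_le.2 (Set.insert_subset ?_ (Set.range_subset_iff.2 h))
    show (1 : Matrix m m R) ⊗ₖ (1 : Matrix n n R) ∈ A
    rw [one_kronecker_one]
    exact one_mem A
  exact this (hT ▸ Submodule.mem_top)

end KroneckerSubalgebra

section KroneckerSquareNegOne

variable {R m n ι : Type*} [CommRing R] [Fintype m] [Fintype n] [DecidableEq m] [DecidableEq n]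
  {A : Subalgebra R (Matrix (m × n) (m × n) R)}

theorem one_kronecker_mem_of_kronecker_mem {X : Matrix m m R} (hX : X * X = -1)
    {T : ι → Matrix n n R} (hT : ∀ k, ∃ a b, T a * T b = -T k) (h : ∀ j, X ⊗ₖ T j ∈ A) (k : ι) :
    (1 : Matrix m m R) ⊗ₖ T k ∈ A := by
  obtain ⟨a, b, hab⟩ := hT k
  simpa [← mul_kronecker_mul, hX, hab, neg_kronecker, kronecker_neg] using mul_mem (h a) (h b)

theorem kronecker_one_mem_of_kronecker_mem {Y : Matrix n n R} (hY : Y * Y = -1)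
    {T : ι → Matrix m m R} (hT : ∀ k, ∃ a b, T a * T b = -T k) (h : ∀ i, T i ⊗ₖ Y ∈ A) (k : ι) :
    T k ⊗ₖ (1 : Matrix n n R) ∈ A := by
  obtain ⟨a, b, hab⟩ := hT k
  simpa [← mul_kronecker_mul, hY, hab, neg_kronecker, kronecker_neg] using mul_mem (h a) (h b)

theorem kronecker_one_mem_of_one_kronecker_mem {X : Matrix m m R} {Y : Matrix n n R}
    (hY : Y * Y = -1) (hY₁ : (1 : Matrix m m R) ⊗ₖ Y ∈ A) (h : X ⊗ₖ Y ∈ A) :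
    X ⊗ₖ (1 : Matrix n n R) ∈ A := by
  simpa [← mul_kronecker_mul, hY, kronecker_neg] using mul_mem hY₁ h

theorem one_kronecker_mem_of_kronecker_one_mem {X : Matrix m m R} {Y : Matrix n n R}
    (hX : X * X = -1) (hX₁ : X ⊗ₖ (1 : Matrix n n R) ∈ A) (h : X ⊗ₖ Y ∈ A) :
    (1 : Matrix m m R) ⊗ₖ Y ∈ A := by
  simpa [← mul_kronecker_mul, hX, neg_kronecker] using mul_mem hX₁ h

end KroneckerSquareNegOne

section Pauli

open Complex

def pauliUnit : Fin 3 → Matrix (Fin 2) (Fin 2) ℂ :=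
  ![I • !![0, 1; 1, 0], I • !![0, -I; I, 0], I • !![1, 0; 0, -1]]

theorem pauliUnit_mul_self (i : Fin 3) : pauliUnit i * pauliUnit i = -1 := by
  fin_cases i <;> ext a b <;> fin_cases a <;> fin_cases b <;>
    simp [pauliUnit, mul_apply, Fin.sum_univ_two, one_apply]

theorem pauliUnit_mul_pauliUnit (i : Fin 3) :
    pauliUnit (i + 1) * pauliUnit (i + 2) = -pauliUnit i := by
  fin_cases i <;> ext a b <;> fin_cases a <;> fin_cases b <;>
    simp [pauliUnit, mul_apply, Fin.sum_univ_two]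

theorem span_insert_one_range_pauliUnit :
    Submodule.span ℂ (insert 1 (Set.range pauliUnit)) = ⊤ := by
  refine eq_top_iff.2 fun X _ => Submodule.mem_span_insert.2 ?_
  refine ⟨(X 0 0 + X 1 1) / 2, _, (Submodule.mem_span_range_iff_exists_fun ℂ).2
    ⟨![-I * (X 0 1 + X 1 0) / 2, (X 0 1 - X 1 0) / 2, -I * (X 0 0 - X 1 1) / 2], rfl⟩, ?_⟩
  ext a b
  fin_cases a <;> fin_cases b <;> simp [pauliUnit, Fin.sum_univ_three] <;> ring_nf <;> simp <;> ring

end Pauli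

theorem stmt_17 (T : Fin 3 → Matrix (Fin 2) (Fin 2) ℂ)
    (h1 : T 0 = Complex.I • !![0, 1; 1, 0])
    (h2 : T 1 = Complex.I • !![0, -Complex.I; Complex.I, 0])
    (h3 : T 2 = Complex.I • !![1, 0; 0, -1])
    (g : Matrix (Fin 3) (Fin 3) ℂ) (hg : g ∈ Matrix.unitaryGroup (Fin 3) ℂ)
    (hreg : (∃ i, ∀ j, g i j ≠ 0) ∨ (∃ j, ∀ i, g i j ≠ 0)) :
    Algebra.adjoin ℂ
        {x : Matrix (Fin 2 × Fin 2) (Fin 2 × Fin 2) ℂ | ∃ i j, x = g i j • (T i ⊗ₖ T j)} =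
      ⊤ := by
  obtain rfl : T = pauliUnit := funext fun i => by fin_cases i <;> assumption
  set A := Algebra.adjoin ℂ
    {x : Matrix (Fin 2 × Fin 2) (Fin 2 × Fin 2) ℂ | ∃ i j, x = g i j • (pauliUnit i ⊗ₖ pauliUnit j)}
  have hmem : ∀ i j, g i j ≠ 0 → pauliUnit i ⊗ₖ pauliUnit j ∈ A := fun i j hij => by
    simpa [hij] using A.smul_mem (Algebra.subset_adjoin ⟨i, j, rfl⟩) (g i j)⁻¹
  have hcyc (k : Fin 3) : ∃ a b, pauliUnit a * pauliUnit b = -pauliUnit k :=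
    ⟨_, _, pauliUnit_mul_pauliUnit k⟩
  obtain ⟨hl, hr⟩ : (∀ k, pauliUnit k ⊗ₖ 1 ∈ A) ∧ (∀ k, 1 ⊗ₖ pauliUnit k ∈ A) := by
    rcases hreg with ⟨i, hi⟩ | ⟨j, hj⟩
    · have hr := one_kronecker_mem_of_kronecker_mem (pauliUnit_mul_self i) hcyc
        fun j => hmem i j (hi j)
      refine ⟨fun k => ?_, hr⟩
      obtain ⟨j, hkj⟩ := exists_ne_zero_of_mem_unitaryGroup hg k
      exact kronecker_one_mem_of_one_kronecker_mem (pauliUnit_mul_self j) (hr j) (hmem k j hkj)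
    · have hl := kronecker_one_mem_of_kronecker_mem (pauliUnit_mul_self j) hcyc
        fun i => hmem i j (hj i)
      refine ⟨hl, fun k => ?_⟩
      obtain ⟨i, hik⟩ := exists_ne_zero_of_mem_unitaryGroup' hg k
      exact one_kronecker_mem_of_kronecker_one_mem (pauliUnit_mul_self i) (hl i) (hmem i k hik)
  exact Subalgebra.eq_top_of_kronecker_one_mem
    (kronecker_one_mem_of_span_eq_top span_insert_one_range_pauliUnit hl)
    (one_kronecker_mem_of_span_eq_top span_insert_one_range_pauliUnit hr)
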